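/- arXiv:2111.10710 — 9 statements merged into one kernel-verified Lean document; each statement's English description precedes it below -/
import Mathlib

section
/- Let X be the set of rational numbers with the discrete topology. The subspace of CL(X) (with the Vietoris topology) consisting of all cuts of ℚ is homeomorphic to the Sorgenfrey line. -/
open Set TopologicalSpace

/-- The hyperspace of nonempty closed subsets of `X`. -/
def CL (X : Type*) [TopologicalSpace X] : Type _ :=
  {A : Set X // A.Nonempty ∧ IsClosed A}

/-- The Vietoris topology on `CL X`. -/
instance CL.instTopologicalSpace (X : Type*) [TopologicalSpace X] :
    TopologicalSpace (CL X) :=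
  .generateFrom
    ({S | ∃ U : Set X, IsOpen U ∧ S = {K : CL X | K.1 ⊆ U}} ∪
     {S | ∃ U : Set X, IsOpen U ∧ S = {K : CL X | (K.1 ∩ U).Nonempty}})

/-- The rationals with the discrete topology. -/
def Qd : Type := ℚ

instance : TopologicalSpace Qd := ⊥
instance : DiscreteTopology Qd := ⟨rfl⟩
instance : LinearOrder Qd := inferInstanceAs (LinearOrder ℚ)

/-- A cut: a proper nonempty subset of `ℚ` with no largest element that is
downward closed. -/
def IsCut (C : Set Qd) : Prop :=
  C.Nonempty ∧ C ≠ Set.univ ∧ (∀ p ∈ C, ∃ q ∈ C, p < q) ∧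
    ∀ p ∈ C, ∀ q : Qd, q ≤ p → q ∈ C

/-- The Sorgenfrey line: `ℝ` with the lower-limit topology. -/
def SorgLine : Type := ℝ

instance : TopologicalSpace SorgLine :=
  .generateFrom {S | ∃ a b : ℝ, S = Set.Ico a b}

namespace CutsSorg

/-- Cast from `Qd` to `ℝ`. -/
def toR (q : Qd) : ℝ := ((show ℚ from q) : ℝ)

/-- Identity map `ℝ → SorgLine`. -/
def mkS (r : ℝ) : SorgLine := r

/-- Identity map `SorgLine → ℝ`. -/
def unS (s : SorgLine) : ℝ := s

lemma toR_lt_toR {p q : Qd} : toR p < toR q ↔ p < q := Rat.cast_lt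

lemma toR_le_toR {p q : Qd} : toR p ≤ toR q ↔ p ≤ q := Rat.cast_le

/-- The cut associated to a real number. -/
def cutSet (r : ℝ) : Set Qd := {q | toR q < r}

lemma cutSet_mono {r s : ℝ} (h : r ≤ s) : cutSet r ⊆ cutSet s :=
  fun _ hq => lt_of_lt_of_le hq h

lemma cutSet_nonempty (r : ℝ) : (cutSet r).Nonempty := by
  obtain ⟨q, hq⟩ := exists_rat_lt r
  exact ⟨show Qd from q, hq⟩

lemma isCut_cutSet (r : ℝ) : IsCut (cutSet r) := by
  refine ⟨cutSet_nonempty r, ?_, ?_, ?_⟩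
  · obtain ⟨q, hq⟩ := exists_rat_gt r
    intro h
    have h2 : (show Qd from q) ∈ cutSet r := h ▸ Set.mem_univ _
    exact absurd (lt_trans h2 hq) (lt_irrefl _)
  · intro p hp
    obtain ⟨m, hm1, hm2⟩ := exists_rat_btwn (show toR p < r from hp)
    exact ⟨show Qd from m, hm2, toR_lt_toR.mp hm1⟩
  · intro p hp q hq
    exact lt_of_le_of_lt (toR_le_toR.mpr hq) hp

/-- The supremum of a set of rationals. -/
noncomputable def supC (C : Set Qd) : ℝ := sSup (toR '' C)

lemma isLUB_supC {C : Set Qd} (hC : IsCut C) : IsLUB (toR '' C) (supC C) := by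
  obtain ⟨hne, hnu, _, hdc⟩ := hC
  obtain ⟨q, hq⟩ : ∃ q : Qd, q ∉ C := by
    by_contra h
    push_neg at h
    exact hnu (Set.eq_univ_of_forall h)
  refine isLUB_csSup (hne.image _) ⟨toR q, ?_⟩
  rintro _ ⟨p, hp, rfl⟩
  by_contra h
  push_neg at h
  exact hq (hdc p hp q (le_of_lt (toR_lt_toR.mp h)))

lemma mem_iff_lt_supC {C : Set Qd} (hC : IsCut C) {q : Qd} :
    q ∈ C ↔ toR q < supC C := by
  have hl := isLUB_supC hC
  constructor
  · intro hq
    obtain ⟨p, hp, hqp⟩ := hC.2.2.1 q hq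
    exact lt_of_lt_of_le (toR_lt_toR.mpr hqp) (hl.1 ⟨p, hp, rfl⟩)
  · intro hq
    by_contra h
    have hle : supC C ≤ toR q := by
      apply hl.2
      rintro _ ⟨p, hp, rfl⟩
      by_contra h2
      push_neg at h2
      exact h (hC.2.2.2 p hp q (le_of_lt (toR_lt_toR.mp h2)))
    exact absurd (lt_of_lt_of_le hq hle) (lt_irrefl _)

lemma cutSet_supC {C : Set Qd} (hC : IsCut C) : cutSet (supC C) = C := by
  ext q
  exact (mem_iff_lt_supC hC).symm

lemma supC_cutSet (r : ℝ) : supC (cutSet r) = r := by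
  have h1 : IsLUB (toR '' cutSet r) r := by
    constructor
    · rintro _ ⟨p, hp, rfl⟩
      exact le_of_lt hp
    · intro b hb
      by_contra h
      push_neg at h
      obtain ⟨m, hm1, hm2⟩ := exists_rat_btwn h
      exact absurd (hb ⟨show Qd from m, hm2, rfl⟩) (not_le.mpr hm1)
  exact (isLUB_supC (isCut_cutSet r)).unique h1

/-- A sufficient condition for openness in the Sorgenfrey line. -/
lemma sorg_isOpen {S : Set SorgLine}
    (h : ∀ s ∈ S, ∃ b : ℝ, unS s < b ∧
      ∀ x : SorgLine, unS s ≤ unS x → unS x < b → x ∈ S) :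
    IsOpen S := by
  choose b hb hsub using h
  have hS : S = ⋃ s : S, (Ico (unS s.1) (b s.1 s.2) : Set ℝ) := by
    ext x
    constructor
    · intro hx
      exact Set.mem_iUnion.mpr ⟨⟨x, hx⟩, le_refl _, hb x hx⟩
    · intro hx
      obtain ⟨s, hs⟩ := Set.mem_iUnion.mp hx
      exact hsub s.1 s.2 x hs.1 hs.2
  rw [hS]
  exact isOpen_iUnion fun s =>
    TopologicalSpace.isOpen_generateFrom_of_mem ⟨unS s.1, b s.1 s.2, rfl⟩

lemma cl_open_sub (U : Set Qd) : IsOpen {K : CL Qd | K.1 ⊆ U} :=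
  TopologicalSpace.isOpen_generateFrom_of_mem (Or.inl ⟨U, isOpen_discrete U, rfl⟩)

lemma cl_open_hit (U : Set Qd) : IsOpen {K : CL Qd | (K.1 ∩ U).Nonempty} :=
  TopologicalSpace.isOpen_generateFrom_of_mem (Or.inr ⟨U, isOpen_discrete U, rfl⟩)

/-- The map from the Sorgenfrey line to the hyperspace. -/
def g (s : SorgLine) : CL Qd :=
  ⟨cutSet (-unS s), cutSet_nonempty _, isClosed_discrete _⟩

/-- The underlying equivalence. -/
noncomputable def e : {K : CL Qd // IsCut K.1} ≃ SorgLine where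
  toFun K := mkS (-supC K.1.1)
  invFun s := ⟨g s, isCut_cutSet _⟩
  left_inv K := by
    apply Subtype.ext
    apply Subtype.ext
    show cutSet (-(-supC K.1.1)) = K.1.1
    rw [neg_neg]
    exact cutSet_supC K.2
  right_inv s := by
    show mkS (-supC (cutSet (-unS s))) = s
    rw [supC_cutSet, neg_neg]
    rfl

lemma continuous_e : Continuous e := by
  apply continuous_generateFrom_iff.mpr
  rintro S ⟨a, b, rfl⟩
  have key : e ⁻¹' (Ico a b : Set ℝ) =
      (Subtype.val ⁻¹' {K : CL Qd | K.1 ⊆ {q | toR q < -a}}) ∩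
      (Subtype.val ⁻¹' {K : CL Qd | (K.1 ∩ {q | -b < toR q}).Nonempty}) := by
    ext K
    have hl := isLUB_supC K.2
    constructor
    · rintro ⟨h1', h2'⟩
      have h1 : a ≤ -supC K.1.1 := h1'
      have h2 : -supC K.1.1 < b := h2'
      constructor
      · intro q hq
        have hlt : toR q < supC K.1.1 := (mem_iff_lt_supC K.2).mp hq
        show toR q < -a
        linarith
      · by_contra h
        have hle : supC K.1.1 ≤ -b := by
          apply hl.2
          rintro _ ⟨p, hp, rfl⟩
          by_contra h3
          push_neg at h3
          exact h ⟨p, hp, h3⟩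
        linarith
    · rintro ⟨h1, h2⟩
      have ha : supC K.1.1 ≤ -a := by
        apply hl.2
        rintro _ ⟨p, hp, rfl⟩
        exact le_of_lt (h1 hp)
      obtain ⟨q, hq1, hq2⟩ := h2
      have hq2' : -b < toR q := hq2
      have hqle : toR q ≤ supC K.1.1 := hl.1 ⟨q, hq1, rfl⟩
      exact ⟨show a ≤ -supC K.1.1 by linarith,
             show -supC K.1.1 < b by linarith⟩
  rw [key]
  exact ((cl_open_sub _).preimage continuous_subtype_val).inter
    ((cl_open_hit _).preimage continuous_subtype_val)

lemma continuous_g : Continuous g := by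
  apply continuous_generateFrom_iff.mpr
  rintro S (⟨U, -, rfl⟩ | ⟨U, -, rfl⟩)
  · apply sorg_isOpen
    intro s hs
    have hs' : cutSet (-unS s) ⊆ U := hs
    refine ⟨unS s + 1, by linarith, fun x hx1 _ => ?_⟩
    show cutSet (-unS x) ⊆ U
    exact subset_trans (cutSet_mono (by linarith)) hs'
  · apply sorg_isOpen
    intro s hs
    obtain ⟨q, hq1, hq2⟩ := hs
    have hq1' : toR q < -unS s := hq1
    refine ⟨-toR q, by linarith, fun x hx1 hx2 => ?_⟩
    exact ⟨q, show toR q < -unS x by linarith, hq2⟩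

lemma continuous_e_symm : Continuous e.symm :=
  Continuous.subtype_mk continuous_g fun _ => isCut_cutSet _

end CutsSorg

/-- The subspace of `CL(ℚ_discrete)` consisting of all cuts is homeomorphic to
the Sorgenfrey line. -/
theorem cuts_homeomorph_sorgenfrey :
    Nonempty ({K : CL Qd // IsCut K.1} ≃ₜ SorgLine) :=
  ⟨{ toEquiv := CutsSorg.e
     continuous_toFun := CutsSorg.continuous_e
     continuous_invFun := CutsSorg.continuous_e_symm }⟩
end

section
/- The hyperspace CL(D) of a countably infinite discrete space D, with the Vietoris topology, contains a closed subspace homeomorphic to the Sorgenfrey plane 𝕊², where 𝕊 is the Sorgenfrey line. More generally, it contains a closed copy of 𝕊ⁿ for each natural number n ≥ 1. -/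
open Set TopologicalSpace

/-! A point `t` of the Sorgenfrey line is coded by the set `{q ∈ ℚ | t < q} ∪ {⌊t⌋}` of
`ℚ ⊕ ℤ`. For a discrete space the Vietoris conditions `K ⊆ U` and `K ∩ U ≠ ∅` translate into
half-open conditions on `t`: `a ≤ t` iff no rational `≤ a` is coded, and `t < b` iff some
rational `< b` is coded. The integer marker confines approximations of a code to one unit
interval, so a set that is approximated by codes on every finite subset is itself a code, and
the codes form a closed set. Splitting `D` into `n` copies of `ℚ ⊕ ℤ` gives a closed copy of
`𝕊ⁿ`. -/

open Topology

namespace SorgLine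

def toReal : SorgLine ≃ ℝ := Equiv.refl ℝ

theorem isOpen_preimage_of_forall_exists_Ico_subset {s : Set ℝ}
    (h : ∀ t ∈ s, ∃ b, t < b ∧ Ico t b ⊆ s) : IsOpen (toReal ⁻¹' s) := by
  choose! b hb using h
  have hs : s = ⋃ t ∈ s, Ico t (b t) :=
    Subset.antisymm (fun t ht => mem_biUnion ht ⟨le_rfl, (hb t ht).1⟩)
      (iUnion₂_subset fun t ht => (hb t ht).2)
  rw [hs, preimage_iUnion₂]
  exact isOpen_biUnion fun t _ => isOpen_generateFrom_of_mem ⟨t, b t, rfl⟩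

theorem isOpen_preimage_Iio (b : ℝ) : IsOpen (toReal ⁻¹' Iio b) :=
  isOpen_preimage_of_forall_exists_Ico_subset fun _ ht => ⟨b, ht, fun _ hu => hu.2⟩

theorem isOpen_preimage_of_isUpperSet {s : Set ℝ} (hs : IsUpperSet s) : IsOpen (toReal ⁻¹' s) :=
  isOpen_preimage_of_forall_exists_Ico_subset fun t ht =>
    ⟨t + 1, lt_add_one t, fun _ hu => hs hu.1 ht⟩

theorem continuous_floor_toReal : Continuous fun t : SorgLine => ⌊toReal t⌋ :=
  continuous_discrete_rng.2 fun m =>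
    isOpen_preimage_of_forall_exists_Ico_subset (s := {t | ⌊t⌋ = m}) fun t ht =>
    ⟨⌊t⌋ + 1, Int.lt_floor_add_one t, fun _ hu =>
      (Int.floor_eq_iff.2 ⟨(Int.floor_le t).trans hu.1, hu.2⟩).trans ht⟩

end SorgLine

open SorgLine

def sorgCode (t : ℝ) : Set (ℚ ⊕ ℤ) := {s | s.elim (fun q : ℚ => t < q) (⌊t⌋ = ·)}

@[simp] theorem inl_mem_sorgCode {t : ℝ} {q : ℚ} : Sum.inl q ∈ sorgCode t ↔ t < q := Iff.rfl

@[simp] theorem inr_mem_sorgCode {t : ℝ} {m : ℤ} : Sum.inr m ∈ sorgCode t ↔ ⌊t⌋ = m := Iff.rfl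

theorem sorgCode_subset_iff {t : ℝ} {V : Set (ℚ ⊕ ℤ)} :
    sorgCode t ⊆ V ↔ (∀ q : ℚ, t < q → Sum.inl q ∈ V) ∧ Sum.inr ⌊t⌋ ∈ V := by
  simp [Set.subset_def, Sum.forall]

theorem le_iff_forall_inl_mem_sorgCode {a t : ℝ} :
    a ≤ t ↔ ∀ q : ℚ, Sum.inl q ∈ sorgCode t → a < q :=
  ⟨fun hat _ hq => hat.trans_lt hq, fun h => le_of_forall_lt_rat_imp_le fun q hq => (h q hq).le⟩

theorem lt_iff_exists_inl_mem_sorgCode {t b : ℝ} :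
    t < b ↔ ∃ q : ℚ, Sum.inl q ∈ sorgCode t ∧ (q : ℝ) < b :=
  ⟨exists_rat_btwn, fun ⟨_, hq, hqb⟩ => hq.trans hqb⟩

theorem sorgCode_injective : Function.Injective sorgCode := fun _ _ hst =>
  le_antisymm (le_iff_forall_inl_mem_sorgCode.2 fun _ hq => inl_mem_sorgCode.1 (hst ▸ hq))
    (le_iff_forall_inl_mem_sorgCode.2 fun _ hq => inl_mem_sorgCode.1 (hst.symm ▸ hq))

theorem isOpen_setOf_mem_sorgCode (s : ℚ ⊕ ℤ) :
    IsOpen {t : SorgLine | s ∈ sorgCode (toReal t)} := by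
  cases s with
  | inl q => exact isOpen_preimage_Iio q
  | inr m => exact (isOpen_discrete {m}).preimage continuous_floor_toReal

theorem isOpen_setOf_sorgCode_subset (V : Set (ℚ ⊕ ℤ)) :
    IsOpen {t : SorgLine | sorgCode (toReal t) ⊆ V} := by
  simp only [sorgCode_subset_iff]
  exact (isOpen_preimage_of_isUpperSet (s := {t : ℝ | ∀ q : ℚ, t < q → Sum.inl q ∈ V})
    fun _ _ htu ht q hq => ht q (htu.trans_lt hq)).inter
    ((isOpen_discrete {m | Sum.inr m ∈ V}).preimage continuous_floor_toReal)

/-- All approximating codes carry the same marker `m`, and the cut is the infimum of the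
admissible `t` with `⌊t⌋ = m`. -/
theorem exists_eq_sorgCode {S : Set (ℚ ⊕ ℤ)}
    (hS : ∀ G : Finset (ℚ ⊕ ℤ), ↑G ⊆ S → ∃ t, ↑G ⊆ sorgCode t ∧ sorgCode t ⊆ S) :
    ∃ t, S = sorgCode t := by
  obtain ⟨t₀, -, ht₀S⟩ := hS ∅ (by simp)
  set m := ⌊t₀⌋
  have hmS : Sum.inr m ∈ S := ht₀S rfl
  have hpair : ∀ s ∈ S, ∃ t, s ∈ sorgCode t ∧ ⌊t⌋ = m ∧ sorgCode t ⊆ S := fun s hs => by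
    obtain ⟨t, hG, htS⟩ := hS {s, Sum.inr m} (by simp [insert_subset_iff, hs, hmS])
    simp only [Finset.coe_insert, Finset.coe_singleton, insert_subset_iff, singleton_subset_iff,
      inr_mem_sorgCode] at hG
    exact ⟨t, hG.1, hG.2, htS⟩
  set C := {t | ⌊t⌋ = m ∧ sorgCode t ⊆ S}
  have hCbdd : BddBelow C := ⟨m, fun t ht => ht.1 ▸ Int.floor_le t⟩
  have hCne : C.Nonempty := ⟨t₀, rfl, ht₀S⟩
  have hfloor : ⌊sInf C⌋ = m := Int.floor_eq_iff.2
    ⟨le_csInf hCne fun t ht => ht.1 ▸ Int.floor_le t,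
      (csInf_le hCbdd hCne.some_mem).trans_lt (hCne.some_mem.1 ▸ Int.lt_floor_add_one _)⟩
  refine ⟨sInf C, Subset.antisymm (fun s hs => ?_)
    (sorgCode_subset_iff.2 ⟨fun q hq => ?_, hfloor ▸ hmS⟩)⟩
  · obtain ⟨t, hst, htm, htS⟩ := hpair s hs
    cases s with
    | inl q => exact (csInf_le hCbdd ⟨htm, htS⟩).trans_lt hst
    | inr m' => exact hfloor.trans (htm.symm.trans hst)
  · obtain ⟨t, htC, htq⟩ := exists_lt_of_csInf_lt hCne hq
    exact htC.2 htq

namespace CL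

variable {X : Type*} [TopologicalSpace X]

theorem isOpen_setOf_subset {U : Set X} (hU : IsOpen U) : IsOpen {K : CL X | K.1 ⊆ U} :=
  isOpen_generateFrom_of_mem (Or.inl ⟨U, hU, rfl⟩)

theorem isOpen_setOf_inter_nonempty {U : Set X} (hU : IsOpen U) :
    IsOpen {K : CL X | (K.1 ∩ U).Nonempty} :=
  isOpen_generateFrom_of_mem (Or.inr ⟨U, hU, rfl⟩)

/-- In a discrete space the sets `{L | G ⊆ L ⊆ K}`, `G ⊆ K` finite, are open neighbourhoods
of `K`. -/
theorem isClosed_of_forall_finset_subset [DiscreteTopology X] {F : Set (CL X)}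
    (hF : ∀ K : CL X, (∀ G : Finset X, ↑G ⊆ K.1 → ∃ L ∈ F, ↑G ⊆ L.1 ∧ L.1 ⊆ K.1) → K ∈ F) :
    IsClosed F := by
  refine isOpen_compl_iff.1 (isOpen_iff_forall_mem_open.2 fun K hK => ?_)
  obtain ⟨G, hGK, hG⟩ : ∃ G : Finset X, ↑G ⊆ K.1 ∧ ∀ L ∈ F, ↑G ⊆ L.1 → ¬L.1 ⊆ K.1 := by
    by_contra! h
    exact hK (hF K h)
  have hopen : IsOpen {L : CL X | (G : Set X) ⊆ L.1} := by
    have : {L : CL X | (G : Set X) ⊆ L.1} = ⋂ x ∈ G, {L | (L.1 ∩ {x}).Nonempty} := by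
      ext; simp [subset_def]
    rw [this]
    exact isOpen_biInter_finset fun x _ => isOpen_setOf_inter_nonempty (isOpen_discrete _)
  exact ⟨{L | (G : Set X) ⊆ L.1} ∩ {L | L.1 ⊆ K.1}, fun L hL hLF => hG L hLF hL.1 hL.2,
    hopen.inter (isOpen_setOf_subset (isOpen_discrete _)), hGK, subset_refl K.1⟩

end CL

section SorgEmbed

variable {ι D : Type*}

def sorgCodes (x : ι → SorgLine) : Set (ι × (ℚ ⊕ ℤ)) := {p | p.2 ∈ sorgCode (toReal (x p.1))}

theorem sorgCodes_injective : Function.Injective (sorgCodes (ι := ι)) := fun x y hxy =>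
  funext fun i => toReal.injective <| sorgCode_injective <| ext fun s =>
    show (i, s) ∈ sorgCodes x ↔ (i, s) ∈ sorgCodes y from hxy ▸ Iff.rfl

theorem le_apply_iff_sorgCodes_subset {x : ι → SorgLine} {i : ι} {a : ℝ} :
    a ≤ toReal (x i) ↔ sorgCodes x ⊆ {p | ∀ q : ℚ, p = (i, Sum.inl q) → a < q} :=
  le_iff_forall_inl_mem_sorgCode.trans ⟨fun h p hp q hpq => h q (by subst hpq; exact hp),
    fun h q hq => h (show (i, Sum.inl q) ∈ sorgCodes x from hq) q rfl⟩

theorem apply_lt_iff_sorgCodes_inter_nonempty {x : ι → SorgLine} {i : ι} {b : ℝ} :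
    toReal (x i) < b ↔ (sorgCodes x ∩ {p | ∃ q : ℚ, p = (i, Sum.inl q) ∧ q < b}).Nonempty :=
  lt_iff_exists_inl_mem_sorgCode.trans ⟨fun ⟨q, hq, hqb⟩ => ⟨(i, .inl q), hq, q, rfl, hqb⟩,
    fun ⟨_, hp, q, hpq, hqb⟩ => ⟨q, by subst hpq; exact hp, hqb⟩⟩

theorem isOpen_setOf_sorgCodes_subset [Finite ι] (V : Set (ι × (ℚ ⊕ ℤ))) :
    IsOpen {x : ι → SorgLine | sorgCodes x ⊆ V} := by
  have : {x : ι → SorgLine | sorgCodes x ⊆ V} =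
      ⋂ i, (fun x => x i) ⁻¹' {t | sorgCode (toReal t) ⊆ {s | (i, s) ∈ V}} := by
    ext x; simp [sorgCodes, subset_def]
  rw [this]
  exact isOpen_iInter_of_finite fun i =>
    (isOpen_setOf_sorgCode_subset _).preimage (continuous_apply i)

theorem isOpen_setOf_sorgCodes_inter_nonempty (V : Set (ι × (ℚ ⊕ ℤ))) :
    IsOpen {x : ι → SorgLine | (sorgCodes x ∩ V).Nonempty} := by
  have : {x : ι → SorgLine | (sorgCodes x ∩ V).Nonempty} =
      ⋃ p ∈ V, (fun x => x p.1) ⁻¹' {t | p.2 ∈ sorgCode (toReal t)} := by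
    ext x; simp [sorgCodes, Set.Nonempty, and_comm]
  rw [this]
  exact isOpen_biUnion fun p _ =>
    (isOpen_setOf_mem_sorgCode p.2).preimage (continuous_apply p.1)

variable [TopologicalSpace D] [DiscreteTopology D] [Nonempty ι] (e : ι × (ℚ ⊕ ℤ) ≃ D)

def sorgEmbed (x : ι → SorgLine) : CL D :=
  ⟨e '' sorgCodes x,
    let i := Classical.arbitrary ι; ⟨e (i, .inr ⌊toReal (x i)⌋), mem_image_of_mem e rfl⟩,
    isClosed_discrete _⟩

theorem continuous_sorgEmbed [Finite ι] : Continuous (sorgEmbed e) := by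
  refine continuous_generateFrom_iff.2 ?_
  rintro _ (⟨U, -, rfl⟩ | ⟨U, -, rfl⟩)
  · simpa only [preimage_ofPred_eq, sorgEmbed, image_subset_iff] using
      isOpen_setOf_sorgCodes_subset (e ⁻¹' U)
  · simpa only [preimage_ofPred_eq, sorgEmbed, image_inter_nonempty_iff] using
      isOpen_setOf_sorgCodes_inter_nonempty (e ⁻¹' U)

theorem isInducing_sorgEmbed [Finite ι] : IsInducing (sorgEmbed e) := by
  refine ⟨le_antisymm (continuous_sorgEmbed e).le_induced (le_iInf fun i => ?_)⟩
  rw [← continuous_iff_le_induced, continuous_generateFrom_iff]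
  rintro _ ⟨a, b, rfl⟩
  refine isOpen_induced_iff.2 ⟨{K | K.1 ⊆ e '' {p | ∀ q : ℚ, p = (i, Sum.inl q) → a < q}} ∩
    {K | (K.1 ∩ e '' {p | ∃ q : ℚ, p = (i, Sum.inl q) ∧ q < b}).Nonempty},
    (CL.isOpen_setOf_subset (isOpen_discrete _)).inter
      (CL.isOpen_setOf_inter_nonempty (isOpen_discrete _)), ?_⟩
  ext x
  simp only [sorgEmbed, preimage_inter, preimage_ofPred_eq, mem_inter_iff, mem_ofPred_eq,
    image_subset_image_iff e.injective, ← image_inter e.injective, image_nonempty,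
    ← le_apply_iff_sorgCodes_subset, ← apply_lt_iff_sorgCodes_inter_nonempty]
  rfl

theorem isClosed_range_sorgEmbed : IsClosed (range (sorgEmbed e)) := by
  classical
  refine CL.isClosed_of_forall_finset_subset fun K hK => ?_
  have hfiber : ∀ i, ∃ t, {s | e (i, s) ∈ K.1} = sorgCode t := fun i =>
    exists_eq_sorgCode fun G hG => by
      obtain ⟨_, ⟨x, rfl⟩, hGx, hxK⟩ :=
        hK (G.image fun s => e (i, s)) (by rw [Finset.coe_image]; exact image_subset_iff.2 hG)
      rw [Finset.coe_image, image_subset_iff] at hGx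
      exact ⟨toReal (x i), fun s hs => e.injective.mem_set_image.1 (hGx hs),
        fun s hs => hxK (mem_image_of_mem e hs)⟩
  choose t ht using hfiber
  refine ⟨fun i => toReal.symm (t i), Subtype.ext <| ext fun d => ?_⟩
  obtain ⟨⟨i, s⟩, rfl⟩ := e.surjective d
  exact e.injective.mem_set_image.trans (Set.ext_iff.1 (ht i) s).symm

theorem isClosedEmbedding_sorgEmbed [Finite ι] : IsClosedEmbedding (sorgEmbed e) :=
  ⟨⟨isInducing_sorgEmbed e, fun _ _ h =>
    sorgCodes_injective ((image_injective.2 e.injective) (congrArg Subtype.val h))⟩,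
    isClosed_range_sorgEmbed e⟩

end SorgEmbed

/-- The Vietoris hyperspace of a countably infinite discrete space contains a
closed copy of the `n`-th power of the Sorgenfrey line for every `n ≥ 1`
(in particular a closed copy of the Sorgenfrey plane for `n = 2`). -/
theorem hyperspace_discrete_contains_closed_sorgenfrey_powers
    (D : Type*) [TopologicalSpace D] [DiscreteTopology D] [Countable D] [Infinite D] :
    ∀ n : ℕ, 1 ≤ n → ∃ F : Set (CL D), IsClosed F ∧
      Nonempty (F ≃ₜ (Fin n → SorgLine)) := by
  intro n hn
  have : Nonempty (Fin n) := ⟨⟨0, hn⟩⟩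
  obtain ⟨e⟩ : Nonempty (Fin n × (ℚ ⊕ ℤ) ≃ D) := nonempty_equiv_of_countable
  have h := isClosedEmbedding_sorgEmbed e
  exact ⟨_, h.isClosed_range, ⟨h.isEmbedding.toHomeomorph.symm⟩⟩
end

section
/- Let D = {r_n : n ∈ ℕ} be a countably infinite discrete space. Define G : ℕ × CL(D) → (opens of CL(D)) by: if A = {r_{n₁},…,r_{n_k}} is finite with n₁ < … < n_k, set G(m, A) = ⟨{r_{n₁}},…,{r_{n_k}}⟩ for all m; if A = {r_{n_i} : i ∈ ℕ} is infinite with n_i increasing, set G(m, A) = ⟨{r_{n₁}},…,{r_{n_m}}, A⟩. Then (i) for each A, the family {G(m, A) : m ∈ ℕ} is a neighborhood base at A in CL(D) with the Vietoris topology, and (ii) for each A and m, if B ∈ G(m, A) then G(m, B) ⊆ G(m, A). Consequently CL(D) is non-archimedean quasi-metrizable. -/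
open Set TopologicalSpace

/-- Non-archimedean quasi-metrizability via a `g`-function. -/
def NAQuasiMetrizable (Y : Type*) [TopologicalSpace Y] : Prop :=
  ∃ g : ℕ → Y → Set Y,
    (∀ n y, IsOpen (g n y) ∧ y ∈ g n y) ∧
    (∀ n y, g (n + 1) y ⊆ g n y) ∧
    (∀ y U, IsOpen U → y ∈ U → ∃ n, g n y ⊆ U) ∧
    ∀ n x y, y ∈ g n x → g n y ⊆ g n x

open scoped Classical in
/-- For an enumeration `r` of `D`: all of `A` if `A` is finite, and otherwise
the first `m` elements of `A` in the enumeration order. -/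
noncomputable def firstElts {D : Type*} (r : ℕ ≃ D) (m : ℕ) (A : Set D) : Set D :=
  if A.Finite then A
  else {x ∈ A | ({y ∈ A | r.symm y < r.symm x}).ncard < m}

/-- `G(m, A) = ⟨{a₁},…,{a_k}⟩` for finite `A = {a₁,…,a_k}` and
`G(m, A) = ⟨{a₁},…,{a_m}, A⟩` for infinite `A` (elements enumerated in
increasing order of indices). -/
noncomputable def GG {D : Type*} [TopologicalSpace D] (r : ℕ ≃ D) (m : ℕ)
    (A : CL D) : Set (CL D) :=
  {K : CL D | K.1 ⊆ A.1 ∧ firstElts r m A.1 ⊆ K.1}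

/-!
`G(m, A)` consists of the closed `K ⊆ A` containing the finite set of the first `m` points of `A`
(all of `A` when `A` is finite). It is open because points of a discrete space are open, and
each subbasic Vietoris neighbourhood of `A` contains some `G(m, A)`: `{K | K ⊆ U}` contains all of
them, and `{K | K ∩ U ≠ ∅}` contains `G(m, A)` once a point of `A ∩ U` is among the first `m`.
The condition `G(m, B) ⊆ G(m, A)` for `B ∈ G(m, A)` holds because `B ⊆ A` has no more
elements than `A` below any point, so the first `m` points of `A`, which lie in `B`, stay among
the first `m` points of `B`.
-/

open Filter

open scoped Topology

section FirstElts

variable {D : Type*} (r : ℕ ≃ D)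

lemma finite_setOf_symm_lt (A : Set D) (x : D) : {y ∈ A | r.symm y < r.symm x}.Finite :=
  ((finite_Iio (r.symm x)).preimage r.symm.injective.injOn).subset fun _ hy => hy.2

lemma ncard_setOf_symm_lt_lt_of_lt {A : Set D} {x x' : D} (hx : x ∈ A)
    (h : r.symm x < r.symm x') :
    {y ∈ A | r.symm y < r.symm x}.ncard < {y ∈ A | r.symm y < r.symm x'}.ncard :=
  ncard_lt_ncard ⟨fun _ hy => ⟨hy.1, hy.2.trans h⟩, fun hsub => (hsub ⟨hx, h⟩).2.false⟩
    (finite_setOf_symm_lt r A x')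

lemma firstElts_of_finite (m : ℕ) {A : Set D} (hA : A.Finite) : firstElts r m A = A :=
  if_pos hA

lemma firstElts_of_infinite (m : ℕ) {A : Set D} (hA : A.Infinite) :
    firstElts r m A = {x ∈ A | ({y ∈ A | r.symm y < r.symm x}).ncard < m} :=
  if_neg hA

lemma firstElts_subset (m : ℕ) (A : Set D) : firstElts r m A ⊆ A := by
  rcases A.finite_or_infinite with hA | hA
  · rw [firstElts_of_finite r m hA]
  · rw [firstElts_of_infinite r m hA]
    exact sep_subset _ _

lemma firstElts_mono {m m' : ℕ} (h : m ≤ m') (A : Set D) :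
    firstElts r m A ⊆ firstElts r m' A := by
  rcases A.finite_or_infinite with hA | hA
  · simp only [firstElts_of_finite r _ hA, subset_rfl]
  · simp only [firstElts_of_infinite r _ hA]
    exact fun x hx => ⟨hx.1, hx.2.trans_le h⟩

lemma firstElts_finite (m : ℕ) (A : Set D) : (firstElts r m A).Finite := by
  rcases A.finite_or_infinite with hA | hA
  · rwa [firstElts_of_finite r m hA]
  rw [firstElts_of_infinite r m hA]
  have rank_injOn : InjOn (fun x => {y ∈ A | r.symm y < r.symm x}.ncard)
      {x ∈ A | ({y ∈ A | r.symm y < r.symm x}).ncard < m} := by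
    intro x hx x' hx' heq
    by_contra hne
    rcases (r.symm.injective.ne hne).lt_or_gt with h | h
    · exact (ncard_setOf_symm_lt_lt_of_lt r hx.1 h).ne heq
    · exact (ncard_setOf_symm_lt_lt_of_lt r hx'.1 h).ne heq.symm
  exact Finite.of_finite_image ((finite_Iio m).subset (image_subset_iff.2 fun _ hx => hx.2))
    rank_injOn

lemma exists_mem_firstElts {A : Set D} {a : D} (ha : a ∈ A) : ∃ m, a ∈ firstElts r m A := by
  rcases A.finite_or_infinite with hA | hA
  · exact ⟨0, (firstElts_of_finite r 0 hA).symm ▸ ha⟩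
  · refine ⟨{y ∈ A | r.symm y < r.symm a}.ncard + 1, ?_⟩
    rw [firstElts_of_infinite r _ hA]
    exact ⟨ha, Nat.lt_succ_self _⟩

lemma firstElts_subset_firstElts {m : ℕ} {A B : Set D} (hBA : B ⊆ A)
    (hAB : firstElts r m A ⊆ B) : firstElts r m A ⊆ firstElts r m B := by
  rcases A.finite_or_infinite with hA | hA
  · have hBA_eq : B = A := hBA.antisymm ((firstElts_of_finite r m hA).symm ▸ hAB)
    rw [hBA_eq]
  rcases B.finite_or_infinite with hB | hB
  · rwa [firstElts_of_finite r m hB]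
  intro x hx
  have hxB : x ∈ B := hAB hx
  rw [firstElts_of_infinite r m hA] at hx
  rw [firstElts_of_infinite r m hB]
  have preds_subset : {y ∈ B | r.symm y < r.symm x} ⊆ {y ∈ A | r.symm y < r.symm x} :=
    fun y hy => ⟨hBA hy.1, hy.2⟩
  exact ⟨hxB, (ncard_le_ncard preds_subset (finite_setOf_symm_lt r A x)).trans_lt hx.2⟩

end FirstElts

section Vietoris

variable {D : Type*} [TopologicalSpace D]

lemma CL.isOpen_setOf_subset_s5 {U : Set D} (hU : IsOpen U) : IsOpen {K : CL D | K.1 ⊆ U} :=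
  GenerateOpen.basic _ (Or.inl ⟨U, hU, rfl⟩)

lemma CL.isOpen_setOf_inter_nonempty_s5 {U : Set D} (hU : IsOpen U) :
    IsOpen {K : CL D | (K.1 ∩ U).Nonempty} :=
  GenerateOpen.basic _ (Or.inr ⟨U, hU, rfl⟩)

lemma CL.isOpen_setOf_mem [DiscreteTopology D] (x : D) : IsOpen {K : CL D | x ∈ K.1} := by
  simpa only [inter_singleton_nonempty] using CL.isOpen_setOf_inter_nonempty_s5 (isOpen_discrete {x})

variable (r : ℕ ≃ D)

lemma mem_GG_self (m : ℕ) (A : CL D) : A ∈ GG r m A :=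
  ⟨subset_rfl, firstElts_subset r m A.1⟩

lemma GG_antitone (A : CL D) : Antitone (GG r · A) :=
  fun _ _ h _ hK => ⟨hK.1, (firstElts_mono r h A.1).trans hK.2⟩

lemma isOpen_GG [DiscreteTopology D] (m : ℕ) (A : CL D) : IsOpen (GG r m A) := by
  have hGG : GG r m A = {K : CL D | K.1 ⊆ A.1} ∩ ⋂ x ∈ firstElts r m A.1, {K : CL D | x ∈ K.1} := by
    ext K
    simp only [GG, mem_ofPred_eq, mem_inter_iff, mem_iInter, subset_def]
  rw [hGG]
  exact (CL.isOpen_setOf_subset_s5 (isOpen_discrete _)).inter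
    ((firstElts_finite r m A.1).isOpen_biInter fun x _ => CL.isOpen_setOf_mem x)

lemma exists_GG_subset_of_subbasic (A : CL D) {S : Set (CL D)}
    (hS : S ∈ {S | ∃ U : Set D, IsOpen U ∧ S = {K : CL D | K.1 ⊆ U}} ∪
      {S | ∃ U : Set D, IsOpen U ∧ S = {K : CL D | (K.1 ∩ U).Nonempty}})
    (hA : A ∈ S) : ∃ m, GG r m A ⊆ S := by
  rcases hS with ⟨U, -, rfl⟩ | ⟨U, -, rfl⟩
  · exact ⟨0, fun K hK => hK.1.trans hA⟩
  · obtain ⟨a, haA, haU⟩ := hA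
    obtain ⟨m, hm⟩ := exists_mem_firstElts r haA
    exact ⟨m, fun K hK => ⟨a, hK.2 hm, haU⟩⟩

lemma hasBasis_nhds_GG [DiscreteTopology D] (A : CL D) :
    (𝓝 A).HasBasis (fun _ => True) (GG r · A) := by
  have hGG : (⨅ m, 𝓟 (GG r m A)).HasBasis (fun _ => True) (GG r · A) :=
    hasBasis_iInf_principal (GG_antitone r A).directed_ge
  suffices 𝓝 A = ⨅ m, 𝓟 (GG r m A) from this ▸ hGG
  refine le_antisymm (le_iInf fun m =>
    le_principal_iff.2 ((isOpen_GG r m A).mem_nhds (mem_GG_self r m A))) ?_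
  rw [nhds_generateFrom]
  refine le_iInf₂ fun S ⟨hA, hS⟩ => le_principal_iff.2 ?_
  obtain ⟨m, hm⟩ := exists_GG_subset_of_subbasic r A hS hA
  exact hGG.mem_iff.2 ⟨m, trivial, hm⟩

lemma GG_subset_GG_of_mem {m : ℕ} {A B : CL D} (hB : B ∈ GG r m A) : GG r m B ⊆ GG r m A :=
  fun _ hK => ⟨hK.1.trans hB.1, (firstElts_subset_firstElts r hB.1 hB.2).trans hK.2⟩

end Vietoris

/-- For a countably infinite discrete space `D`, the function `G` gives open
neighborhoods forming a base at each point of `CL D`, with `B ∈ G(m, A)`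
implying `G(m, B) ⊆ G(m, A)`; consequently `CL D` is non-archimedean
quasi-metrizable. -/
theorem hyperspace_discrete_naQuasiMetrizable
    (D : Type*) [TopologicalSpace D] [DiscreteTopology D] (r : ℕ ≃ D) :
    (∀ (m : ℕ) (A : CL D), IsOpen (GG r m A) ∧ A ∈ GG r m A) ∧
    (∀ (A : CL D) (S : Set (CL D)), IsOpen S → A ∈ S → ∃ m, GG r m A ⊆ S) ∧
    (∀ (m : ℕ) (A B : CL D), B ∈ GG r m A → GG r m B ⊆ GG r m A) ∧
    NAQuasiMetrizable (CL D) := by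
  have isOpen_mem : ∀ m A, IsOpen (GG r m A) ∧ A ∈ GG r m A :=
    fun m A => ⟨isOpen_GG r m A, mem_GG_self r m A⟩
  have basis : ∀ (A : CL D) (S : Set (CL D)), IsOpen S → A ∈ S → ∃ m, GG r m A ⊆ S :=
    fun A S hS hA => by
      simpa only [true_and] using (hasBasis_nhds_GG r A).mem_iff.1 (hS.mem_nhds hA)
  have hered : ∀ (m : ℕ) (A B : CL D), B ∈ GG r m A → GG r m B ⊆ GG r m A :=
    fun _ _ _ => GG_subset_GG_of_mem r
  exact ⟨isOpen_mem, basis, hered, fun n => GG r n, isOpen_mem,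
    fun n A => GG_antitone r A n.le_succ, basis, hered⟩
end

section
/- Let X be a topological space and τ an infinite cardinal. Then the tightness of the hyperspace CL(X) with the Vietoris topology is at most τ if and only if the set-tightness of X is at most τ. In particular, CL(X) has countable tightness if and only if X has countable set-tightness. -/
open Set TopologicalSpace

/-- `A` is a cluster set of the family `F ⊆ CL X`: for any finitely many open
sets each meeting `A` and any open `U ⊇ A`, some `F' ∈ F` satisfies `F' ⊆ U`
and meets each of the given open sets. -/
def IsClusterSet {X : Type*} [TopologicalSpace X] (A : Set X)
    (F : Set (CL X)) : Prop :=
  ∀ Vs : Finset (Set X), (∀ V ∈ Vs, IsOpen V ∧ (V ∩ A).Nonempty) →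
    ∀ U : Set X, IsOpen U → A ⊆ U →
      ∃ F' ∈ F, F'.1 ⊆ U ∧ ∀ V ∈ Vs, (F'.1 ∩ V).Nonempty

universe u

/-- Every Vietoris-open set contains, around each of its points, a basic
neighborhood of the form `{L | L ⊆ U, L meets each V ∈ Vs}`. -/
theorem CL.exists_basic {X : Type*} [TopologicalSpace X] {o : Set (CL X)}
    (ho : TopologicalSpace.GenerateOpen
      ({S | ∃ U : Set X, IsOpen U ∧ S = {K : CL X | K.1 ⊆ U}} ∪
       {S | ∃ U : Set X, IsOpen U ∧ S = {K : CL X | (K.1 ∩ U).Nonempty}}) o) :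
    ∀ K : CL X, K ∈ o → ∃ U : Set X, IsOpen U ∧ K.1 ⊆ U ∧
      ∃ Vs : Finset (Set X), (∀ V ∈ Vs, IsOpen V ∧ (V ∩ K.1).Nonempty) ∧
        ∀ L : CL X, L.1 ⊆ U → (∀ V ∈ Vs, (L.1 ∩ V).Nonempty) → L ∈ o := by
  classical
  induction ho with
  | basic s hs =>
      intro K hK
      rcases hs with ⟨U, hU, rfl⟩ | ⟨V, hV, rfl⟩
      · exact ⟨U, hU, hK, ∅, by simp, fun L hL _ => hL⟩
      · refine ⟨univ, isOpen_univ, subset_univ _, {V}, ?_, ?_⟩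
        · intro W hW
          rw [Finset.mem_singleton] at hW
          subst hW
          exact ⟨hV, by rwa [Set.inter_comm]⟩
        · intro L _ hL
          exact hL V (Finset.mem_singleton_self V)
  | univ => exact fun K _ => ⟨univ, isOpen_univ, subset_univ _, ∅, by simp,
      fun L _ _ => mem_univ _⟩
  | inter s t _ _ ihs iht =>
      intro K hK
      obtain ⟨U₁, hU₁, hKU₁, Vs₁, hVs₁, h₁⟩ := ihs K hK.1
      obtain ⟨U₂, hU₂, hKU₂, Vs₂, hVs₂, h₂⟩ := iht K hK.2
      refine ⟨U₁ ∩ U₂, hU₁.inter hU₂, subset_inter hKU₁ hKU₂, Vs₁ ∪ Vs₂, ?_, ?_⟩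
      · intro V hV
        rcases Finset.mem_union.1 hV with h | h
        · exact hVs₁ V h
        · exact hVs₂ V h
      · intro L hL hLV
        exact ⟨h₁ L (hL.trans inter_subset_left)
            (fun V hV => hLV V (Finset.mem_union_left _ hV)),
          h₂ L (hL.trans inter_subset_right)
            (fun V hV => hLV V (Finset.mem_union_right _ hV))⟩
  | sUnion S _ ih =>
      intro K hK
      obtain ⟨t, htS, hKt⟩ := hK
      obtain ⟨U, hU, hKU, Vs, hVs, h⟩ := ih t htS K hKt
      exact ⟨U, hU, hKU, Vs, hVs, fun L hL hLV => ⟨t, htS, h L hL hLV⟩⟩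

/-- `K ∈ closure 𝒜` in the Vietoris topology iff `K` is a cluster set of `𝒜`. -/
theorem CL.mem_closure_iff_isClusterSet {X : Type*} [TopologicalSpace X]
    (𝒜 : Set (CL X)) (K : CL X) :
    K ∈ closure 𝒜 ↔ IsClusterSet K.1 𝒜 := by
  rw [mem_closure_iff]
  constructor
  · intro h Vs hVs U hU hKU
    set o : Set (CL X) :=
      {L : CL X | L.1 ⊆ U} ∩ ⋂ V ∈ Vs, {L : CL X | (L.1 ∩ V).Nonempty} with ho_def
    have ho : IsOpen o := by
      refine IsOpen.inter ?_ ?_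
      · exact TopologicalSpace.GenerateOpen.basic _ (Or.inl ⟨U, hU, rfl⟩)
      · refine isOpen_biInter_finset fun V hV => ?_
        exact TopologicalSpace.GenerateOpen.basic _ (Or.inr ⟨V, (hVs V hV).1, rfl⟩)
    have hKo : K ∈ o := by
      refine ⟨hKU, ?_⟩
      simp only [mem_iInter, mem_setOf_eq]
      intro V hV
      rw [Set.inter_comm]
      exact (hVs V hV).2
    obtain ⟨F', hF'o, hF'A⟩ := h o ho hKo
    obtain ⟨hF'U, hF'V⟩ := hF'o
    refine ⟨F', hF'A, hF'U, ?_⟩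
    intro V hV
    simp only [mem_iInter, mem_setOf_eq] at hF'V
    exact hF'V V hV
  · intro h o ho hKo
    obtain ⟨U, hU, hKU, Vs, hVs, hbasic⟩ := CL.exists_basic ho K hKo
    obtain ⟨F', hF'A, hF'U, hF'V⟩ := h Vs hVs U hU hKU
    exact ⟨F', hbasic F' hF'U hF'V, hF'A⟩

/-- The tightness of the Vietoris hyperspace `CL X` is at most `τ` iff the
set-tightness of `X` is at most `τ`; in particular, `CL X` has countable
tightness iff `X` has countable set-tightness. -/
theorem tightness_hyperspace_iff_set_tightness {X : Type u} [TopologicalSpace X]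
    (τ : Cardinal.{u}) (hτ : Cardinal.aleph0 ≤ τ) :
    ((∀ (𝒜 : Set (CL X)) (K : CL X), K ∈ closure 𝒜 →
        ∃ ℬ ⊆ 𝒜, Cardinal.mk ℬ ≤ τ ∧ K ∈ closure ℬ) ↔
      (∀ (A : CL X) (F : Set (CL X)), IsClusterSet A.1 F →
        ∃ F' ⊆ F, Cardinal.mk F' ≤ τ ∧ IsClusterSet A.1 F')) ∧
    ((∀ (𝒜 : Set (CL X)) (K : CL X), K ∈ closure 𝒜 →
        ∃ ℬ ⊆ 𝒜, ℬ.Countable ∧ K ∈ closure ℬ) ↔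
      (∀ (A : CL X) (F : Set (CL X)), IsClusterSet A.1 F →
        ∃ F' ⊆ F, F'.Countable ∧ IsClusterSet A.1 F')) := by
  constructor
  · constructor
    · intro h A F hF
      obtain ⟨ℬ, hℬF, hcard, hcl⟩ :=
        h F A ((CL.mem_closure_iff_isClusterSet F A).2 hF)
      exact ⟨ℬ, hℬF, hcard, (CL.mem_closure_iff_isClusterSet ℬ A).1 hcl⟩
    · intro h 𝒜 K hK
      obtain ⟨F', hF'𝒜, hcard, hF'⟩ :=
        h K 𝒜 ((CL.mem_closure_iff_isClusterSet 𝒜 K).1 hK)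
      exact ⟨F', hF'𝒜, hcard, (CL.mem_closure_iff_isClusterSet F' K).2 hF'⟩
  · constructor
    · intro h A F hF
      obtain ⟨ℬ, hℬF, hcount, hcl⟩ :=
        h F A ((CL.mem_closure_iff_isClusterSet F A).2 hF)
      exact ⟨ℬ, hℬF, hcount, (CL.mem_closure_iff_isClusterSet ℬ A).1 hcl⟩
    · intro h 𝒜 K hK
      obtain ⟨F', hF'𝒜, hcount, hF'⟩ :=
        h K 𝒜 ((CL.mem_closure_iff_isClusterSet 𝒜 K).1 hK)
      exact ⟨F', hF'𝒜, hcount, (CL.mem_closure_iff_isClusterSet F' K).2 hF'⟩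
end

section
/- If X is a normal topological space, then the closed set character of X is at most the set-tightness of X; that is, if st(X) ≤ τ then every closed subset of X has a neighborhood base (of open sets) in X of cardinality at most τ. In particular, a normal space with countable set-tightness is a D₁-space. -/
open Set TopologicalSpace

universe u

/-- In a normal space, if the set-tightness is at most `τ`, then every closed
set has a neighborhood base of open sets of cardinality at most `τ` (so a
normal space of countable set-tightness is a `D₁`-space). -/
theorem closedChar_le_of_setTightness {X : Type u} [TopologicalSpace X]
    [NormalSpace X] (τ : Cardinal.{u}) (hτ : Cardinal.aleph0 ≤ τ)
    (hst : ∀ (A : CL X) (F : Set (CL X)), IsClusterSet A.1 F →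
      ∃ F' ⊆ F, Cardinal.mk F' ≤ τ ∧ IsClusterSet A.1 F') :
    ∀ A : Set X, IsClosed A → ∃ 𝓑 : Set (Set X), Cardinal.mk 𝓑 ≤ τ ∧
      (∀ B ∈ 𝓑, IsOpen B ∧ A ⊆ B) ∧
      ∀ U : Set X, IsOpen U → A ⊆ U → ∃ B ∈ 𝓑, B ⊆ U := by
  intro A hA
  rcases A.eq_empty_or_nonempty with rfl | hAne
  · refine ⟨{∅}, ?_, ?_, ?_⟩
    · simpa using Cardinal.one_le_aleph0.trans hτ
    · rintro B hB
      rw [mem_singleton_iff] at hB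
      subst hB
      exact ⟨isOpen_empty, subset_rfl⟩
    · intro U hU _
      exact ⟨∅, rfl, empty_subset U⟩
  · set 𝓕 : Set (CL X) := {F | ∃ W : Set X, IsOpen W ∧ A ⊆ W ∧ F.1 = closure W}
      with h𝓕
    have hcl : IsClusterSet A 𝓕 := by
      intro Vs hVs U hUopen hAU
      obtain ⟨W, hWopen, hAW, hWU⟩ := normal_exists_closure_subset hA hUopen hAU
      refine ⟨⟨closure W, hAne.mono (hAW.trans subset_closure), isClosed_closure⟩,
        ⟨W, hWopen, hAW, rfl⟩, hWU, ?_⟩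
      intro V hV
      obtain ⟨x, hxV, hxA⟩ := (hVs V hV).2
      exact ⟨x, (hAW.trans subset_closure) hxA, hxV⟩
    obtain ⟨F', hF'sub, hF'card, hF'cl⟩ := hst ⟨A, hAne, hA⟩ 𝓕 hcl
    refine ⟨(fun F : CL X => interior F.1) '' F', ?_, ?_, ?_⟩
    · exact Cardinal.mk_image_le.trans hF'card
    · rintro B ⟨F, hF, rfl⟩
      obtain ⟨W, hWopen, hAW, hFW⟩ := hF'sub hF
      refine ⟨isOpen_interior, fun x hx => ?_⟩
      show x ∈ interior F.1
      rw [hFW]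
      exact interior_maximal subset_closure hWopen (hAW hx)
    · intro U hU hAU
      obtain ⟨F, hF, hFU, -⟩ := hF'cl ∅ (by simp) U hU hAU
      exact ⟨interior F.1, ⟨F, hF, rfl⟩, interior_subset.trans hFU⟩
end

section
/- Every topological space with a point-countable base is a D₀-space: every compact subset has a countable neighborhood base of open sets. -/
/-!
Miščenko's lemma: if every point lies in only countably many members of `ℬ`, then a set `K` has
only countably many irreducible finite covers by members of `ℬ`. Indeed, fixing `x ∈ K`, an
irreducible cover of `K` with `n + 1` members is `insert B 𝓖` where `x ∈ B ∈ ℬ` (countably many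
choices) and `𝓖` is an irreducible cover of `K \ B` with `n` members. When `K` is compact, every
open `U ⊇ K` contains the union of a finite cover of `K` by basic sets inside `U`, hence of an
irreducible one, so these unions form a countable neighbourhood base of `K`.
-/

open Set TopologicalSpace

section IrreducibleCovers

variable {X : Type*}

def IsIrreducibleCover (K : Set X) (𝓕 : Finset (Set X)) : Prop :=
  Minimal (fun 𝓖 : Finset (Set X) ↦ K ⊆ ⋃₀ ↑𝓖) 𝓕

namespace IsIrreducibleCover

variable {K B : Set X} {𝓕 : Finset (Set X)}

theorem subset_sUnion (h : IsIrreducibleCover K 𝓕) : K ⊆ ⋃₀ ↑𝓕 := h.1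

theorem eq_empty_of_empty (h : IsIrreducibleCover ∅ 𝓕) : 𝓕 = ∅ :=
  Finset.subset_empty.mp (h.2 (empty_subset _) (Finset.empty_subset 𝓕))

theorem erase (h : IsIrreducibleCover K 𝓕) (hB : B ∈ 𝓕) :
    IsIrreducibleCover (K \ B) (𝓕.erase B) := by
  refine ⟨?_, fun 𝓖 h𝓖 h𝓖𝓕 ↦ ?_⟩
  · rintro y ⟨hyK, hyB⟩
    obtain ⟨C, hC𝓕, hyC⟩ := h.subset_sUnion hyK
    exact ⟨C, Finset.mem_coe.mpr (Finset.mem_erase.mpr ⟨by rintro rfl; exact hyB hyC, hC𝓕⟩), hyC⟩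
  · have hcover : K ⊆ ⋃₀ ↑(insert B 𝓖) := fun y hyK ↦ by
      rw [Finset.coe_insert, sUnion_insert]
      by_cases hyB : y ∈ B
      · exact Or.inl hyB
      · exact Or.inr (h𝓖 ⟨hyK, hyB⟩)
    have hsub : insert B 𝓖 ⊆ 𝓕 := Finset.insert_subset hB (h𝓖𝓕.trans (Finset.erase_subset B 𝓕))
    have h𝓕𝓖 : 𝓕 ⊆ insert B 𝓖 := h.2 hcover hsub
    intro C hC
    obtain ⟨hCB, hC𝓕⟩ := Finset.mem_erase.mp hC
    exact (Finset.mem_insert.mp (h𝓕𝓖 hC𝓕)).resolve_left hCB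

end IsIrreducibleCover

theorem exists_isIrreducibleCover_subset {K : Set X} {𝓖 : Finset (Set X)} (h : K ⊆ ⋃₀ ↑𝓖) :
    ∃ 𝓕 ⊆ 𝓖, IsIrreducibleCover K 𝓕 :=
  exists_minimal_le_of_wellFoundedLT _ 𝓖 h

section PointCountable

variable {ℬ : Set (Set X)} (hpc : ∀ x : X, {B ∈ ℬ | x ∈ B}.Countable)
include hpc

theorem countable_setOf_isIrreducibleCover_card_eq (n : ℕ) (K : Set X) :
    {𝓕 : Finset (Set X) | ↑𝓕 ⊆ ℬ ∧ 𝓕.card = n ∧ IsIrreducibleCover K 𝓕}.Countable := by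
  induction n generalizing K with
  | zero =>
    refine (countable_singleton ∅).mono ?_
    rintro 𝓕 ⟨-, hcard, -⟩
    exact Finset.card_eq_zero.mp hcard
  | succ n ih =>
    rcases K.eq_empty_or_nonempty with rfl | ⟨x, hx⟩
    · refine countable_empty.mono ?_
      rintro 𝓕 ⟨-, hcard, h𝓕⟩
      simp [h𝓕.eq_empty_of_empty] at hcard
    refine ((hpc x).biUnion fun B _ ↦ (ih (K \ B)).image (insert B)).mono ?_
    rintro 𝓕 ⟨h𝓕ℬ, hcard, h𝓕⟩
    obtain ⟨B, hB𝓕, hxB⟩ := h𝓕.subset_sUnion hx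
    refine mem_biUnion ⟨h𝓕ℬ hB𝓕, hxB⟩ ⟨𝓕.erase B, ⟨?_, ?_, h𝓕.erase hB𝓕⟩, Finset.insert_erase hB𝓕⟩
    · exact (Finset.coe_subset.mpr (Finset.erase_subset B 𝓕)).trans h𝓕ℬ
    · rw [Finset.card_erase_of_mem hB𝓕, hcard, Nat.add_sub_cancel]

theorem countable_setOf_isIrreducibleCover (K : Set X) :
    {𝓕 : Finset (Set X) | ↑𝓕 ⊆ ℬ ∧ IsIrreducibleCover K 𝓕}.Countable := by
  refine (countable_iUnion fun n ↦ countable_setOf_isIrreducibleCover_card_eq hpc n K).mono ?_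
  rintro 𝓕 ⟨h𝓕ℬ, h𝓕⟩
  exact mem_iUnion.mpr ⟨𝓕.card, h𝓕ℬ, rfl, h𝓕⟩

end PointCountable

theorem TopologicalSpace.IsTopologicalBasis.exists_finset_cover_of_isCompact [TopologicalSpace X]
    {ℬ : Set (Set X)} (hB : IsTopologicalBasis ℬ) {K U : Set X} (hK : IsCompact K)
    (hU : IsOpen U) (hKU : K ⊆ U) :
    ∃ 𝓖 : Finset (Set X), ↑𝓖 ⊆ ℬ ∧ K ⊆ ⋃₀ ↑𝓖 ∧ ⋃₀ ↑𝓖 ⊆ U := by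
  have hcover : K ⊆ ⋃ B ∈ {B ∈ ℬ | B ⊆ U}, B := by
    rw [← sUnion_eq_biUnion, ← hB.open_eq_sUnion' hU]
    exact hKU
  obtain ⟨𝓖, h𝓖, hfin, hK𝓖⟩ :=
    hK.elim_finite_subcover_image (c := fun B ↦ B) (fun B hB' ↦ hB.isOpen hB'.1) hcover
  refine ⟨hfin.toFinset, ?_, ?_, ?_⟩ <;> rw [Finite.coe_toFinset]
  · exact fun B hB' ↦ (h𝓖 hB').1
  · rwa [sUnion_eq_biUnion]
  · exact sUnion_subset fun B hB' ↦ (h𝓖 hB').2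

end IrreducibleCovers

/-- A space with a point-countable base is a `D₀`-space: every compact subset
has a countable neighborhood base of open sets. -/
theorem d0_of_pointCountable_base {X : Type*} [TopologicalSpace X]
    (ℬ : Set (Set X)) (hB : IsTopologicalBasis ℬ)
    (hpc : ∀ x : X, {B ∈ ℬ | x ∈ B}.Countable) :
    ∀ K : Set X, IsCompact K → ∃ 𝓑 : Set (Set X), 𝓑.Countable ∧
      (∀ B ∈ 𝓑, IsOpen B ∧ K ⊆ B) ∧
      ∀ U : Set X, IsOpen U → K ⊆ U → ∃ B ∈ 𝓑, B ⊆ U := by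
  intro K hK
  refine ⟨(fun 𝓕 : Finset (Set X) ↦ ⋃₀ (𝓕 : Set (Set X))) ''
      {𝓕 : Finset (Set X) | ↑𝓕 ⊆ ℬ ∧ IsIrreducibleCover K 𝓕},
    (countable_setOf_isIrreducibleCover hpc K).image _, ?_, ?_⟩
  · rintro _ ⟨𝓕, ⟨h𝓕ℬ, h𝓕⟩, rfl⟩
    exact ⟨isOpen_sUnion fun B hB𝓕 ↦ hB.isOpen (h𝓕ℬ hB𝓕), h𝓕.subset_sUnion⟩
  · intro U hU hKU
    obtain ⟨𝓖, h𝓖ℬ, hK𝓖, h𝓖U⟩ := hB.exists_finset_cover_of_isCompact hK hU hKU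
    obtain ⟨𝓕, h𝓕𝓖, h𝓕⟩ := exists_isIrreducibleCover_subset hK𝓖
    have h𝓕𝓖' : (↑𝓕 : Set (Set X)) ⊆ ↑𝓖 := Finset.coe_subset.mpr h𝓕𝓖
    exact ⟨_, ⟨𝓕, ⟨h𝓕𝓖'.trans h𝓖ℬ, h𝓕⟩, rfl⟩, (sUnion_subset_sUnion h𝓕𝓖').trans h𝓖U⟩
end

section
/- Every developable (Moore-like) space is a D₀-space: in a space admitting a development, every compact subset has a countable neighborhood base of open sets. -/
open Set TopologicalSpace

/-- The star of a point with respect to a family of sets. -/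
def star {X : Type*} (x : X) (𝒰 : Set (Set X)) : Set X :=
  ⋃₀ {U ∈ 𝒰 | x ∈ U}

/-- A developable space is a `D₀`-space: every compact subset has a countable
neighborhood base of open sets. -/
theorem d0_of_developable {X : Type*} [TopologicalSpace X]
    (𝒰 : ℕ → Set (Set X)) (hopen : ∀ n, ∀ U ∈ 𝒰 n, IsOpen U)
    (hcover : ∀ n, ⋃₀ 𝒰 n = Set.univ)
    (hbase : ∀ (x : X) (U : Set X), IsOpen U → x ∈ U → ∃ n, star x (𝒰 n) ⊆ U) :
    ∀ K : Set X, IsCompact K → ∃ 𝓑 : Set (Set X), 𝓑.Countable ∧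
      (∀ B ∈ 𝓑, IsOpen B ∧ K ⊆ B) ∧
      ∀ U : Set X, IsOpen U → K ⊆ U → ∃ B ∈ 𝓑, B ⊆ U := by
  intro K hK
  -- for each `n`, pick a finite subcover `F n ⊆ 𝒰 n` of `K`
  have hsub : ∀ n, ∃ F : Set (Set X), F.Finite ∧ F ⊆ 𝒰 n ∧ K ⊆ ⋃₀ F := by
    intro n
    have hcov : K ⊆ ⋃ i : (𝒰 n), (i : Set X) := by
      intro x _
      have : x ∈ ⋃₀ 𝒰 n := by rw [hcover n]; trivial
      rcases this with ⟨V, hV, hxV⟩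
      exact mem_iUnion.2 ⟨⟨V, hV⟩, hxV⟩
    obtain ⟨t, ht⟩ := hK.elim_finite_subcover (fun i : (𝒰 n) => (i : Set X))
      (fun i => hopen n i i.2) hcov
    refine ⟨Subtype.val '' (t : Set (𝒰 n)), (t.finite_toSet).image _, ?_, ?_⟩
    · rintro V ⟨i, _, rfl⟩; exact i.2
    · intro x hx
      rcases mem_iUnion₂.1 (ht hx) with ⟨i, hi, hxi⟩
      exact ⟨i, ⟨i, hi, rfl⟩, hxi⟩
  choose F hFfin hFsub hFcov using hsub
  set 𝒞 : Set (Set X) := ⋃ n, F n with h𝒞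
  have h𝒞count : 𝒞.Countable := countable_iUnion fun n => (hFfin n).countable
  refine ⟨{B | ∃ S : Set (Set X), S.Finite ∧ S ⊆ 𝒞 ∧ K ⊆ ⋃₀ S ∧ B = ⋃₀ S}, ?_, ?_, ?_⟩
  · -- countable
    apply Set.Countable.mono ?_ ((countable_setOf_finite_subset h𝒞count).image Set.sUnion)
    rintro B ⟨S, hSfin, hS𝒞, -, rfl⟩
    exact ⟨S, ⟨hSfin, hS𝒞⟩, rfl⟩
  · -- open and contain K
    rintro B ⟨S, -, hS𝒞, hKS, rfl⟩
    refine ⟨isOpen_sUnion ?_, hKS⟩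
    intro V hV
    rcases mem_iUnion.1 (hS𝒞 hV) with ⟨n, hn⟩
    exact hopen n V (hFsub n hn)
  · -- cofinal
    intro U hU hKU
    set Kn : ℕ → Set X := fun n => {x ∈ K | star x (𝒰 n) ⊆ U} with hKn
    set G : ℕ → Set (Set X) := fun n => {V ∈ F n | (V ∩ Kn n).Nonempty} with hG
    have hGopen : ∀ n, ∀ V ∈ G n, IsOpen V := fun n V hV => hopen n V (hFsub n hV.1)
    have hWopen : ∀ n, IsOpen (⋃₀ G n) := fun n => isOpen_sUnion (hGopen n)
    have hGU : ∀ n, ⋃₀ G n ⊆ U := by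
      rintro n x ⟨V, ⟨hVF, z, hzV, hzK, hzst⟩, hxV⟩
      exact hzst ⟨V, ⟨hFsub n hVF, hzV⟩, hxV⟩
    have hKcov : K ⊆ ⋃ n, ⋃₀ G n := by
      intro x hx
      obtain ⟨n, hn⟩ := hbase x U hU (hKU hx)
      rcases hFcov n hx with ⟨V, hVF, hxV⟩
      exact mem_iUnion.2 ⟨n, V, ⟨hVF, x, hxV, hx, hn⟩, hxV⟩
    obtain ⟨T, hT⟩ := hK.elim_finite_subcover (fun n => ⋃₀ G n) hWopen hKcov
    refine ⟨⋃₀ (⋃ n ∈ T, G n), ⟨⋃ n ∈ T, G n, ?_, ?_, ?_, rfl⟩, ?_⟩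
    · exact T.finite_toSet.biUnion fun n _ => (hFfin n).subset fun V hV => hV.1
    · intro V hV
      rcases mem_iUnion₂.1 hV with ⟨n, -, hn⟩
      exact mem_iUnion.2 ⟨n, hn.1⟩
    · intro x hx
      rcases mem_iUnion₂.1 (hT hx) with ⟨n, hn, V, hV, hxV⟩
      exact ⟨V, mem_iUnion₂.2 ⟨n, hn, hV⟩, hxV⟩
    · rintro x ⟨V, hV, hxV⟩
      rcases mem_iUnion₂.1 hV with ⟨n, -, hn⟩
      exact hGU n ⟨V, hn, hxV⟩
end

section
/- Let X be a regular space with a σ-locally countable network. Then every singleton in X is a Gδ-set. -/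
open Set TopologicalSpace

/-- In a regular (`T₃`) space with a `σ`-locally countable network, every
singleton is a `Gδ`-set. -/
theorem singleton_gdelta_of_sigma_locally_countable_network {X : Type*}
    [TopologicalSpace X] [T3Space X] (Pn : ℕ → Set (Set X))
    (hlc : ∀ (n : ℕ) (x : X), ∃ V : Set X, IsOpen V ∧ x ∈ V ∧
      {P ∈ Pn n | (P ∩ V).Nonempty}.Countable)
    (hnet : ∀ (x : X) (U : Set X), IsOpen U → x ∈ U →
      ∃ n, ∃ P ∈ Pn n, x ∈ P ∧ P ⊆ U) :
    ∀ x : X, IsGδ ({x} : Set X) := by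
  intro x
  choose V hVopen hxV hcnt using fun n => hlc n x
  set Q : Set (Set X) :=
      ⋃ n, {P ∈ Pn n | (P ∩ V n).Nonempty ∧ x ∉ closure P} with hQ
  have hQc : Q.Countable := by
    refine countable_iUnion fun n => (hcnt n).mono ?_
    rintro P ⟨h1, h2, h3⟩
    exact ⟨h1, h2⟩
  have key : ({x} : Set X) = (⋂ n, V n) ∩ ⋂ P ∈ Q, (closure P)ᶜ := by
    apply Subset.antisymm
    · rintro y rfl
      refine ⟨mem_iInter.2 hxV, ?_⟩
      simp only [mem_iInter, mem_compl_iff]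
      rintro P hP
      obtain ⟨n, hn⟩ := mem_iUnion.1 hP
      exact hn.2.2
    · rintro y ⟨hy1, hy2⟩
      simp only [mem_iInter, mem_compl_iff] at hy1 hy2
      by_contra hne
      have hyx : y ≠ x := by simpa using hne
      have hmem : ({x} : Set X)ᶜ ∈ nhds y :=
        (isOpen_compl_singleton).mem_nhds (by simpa using hyx)
      obtain ⟨t, ht, htc, hts⟩ := exists_mem_nhds_isClosed_subset hmem
      obtain ⟨n, P, hP, hyP, hPU⟩ :=
        hnet y (interior t) isOpen_interior (mem_interior_iff_mem_nhds.2 ht)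
      have hxP : x ∉ closure P := fun hx =>
        hts ((htc.closure_subset_iff.2 (hPU.trans interior_subset)) hx) rfl
      have hPQ : P ∈ Q :=
        mem_iUnion.2 ⟨n, hP, ⟨y, hyP, hy1 n⟩, hxP⟩
      exact hy2 P hPQ (subset_closure hyP)
  rw [key]
  exact (IsGδ.iInter fun n => (hVopen n).isGδ).inter
    (IsGδ.biInter hQc fun P _ => isClosed_closure.isOpen_compl.isGδ)
end

section
/- Let X be a first-countable T₁ space and A a nonempty closed subset of X. If U₁ ⊇ U₂ ⊇ … are subsets of X with A ⊆ U_i for all i, each U_i is a sequential neighborhood of A (every sequence in X converging to a point of A is eventually in U_i), and for every open V ⊇ A some U_i ⊆ V, then {int(U_i) : i ∈ ℕ} is a countable neighborhood base of A in X; in particular A ⊆ int(U_i) for every i. -/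
open Set TopologicalSpace Filter

/-- In a first-countable `T₁` space, given a decreasing sequence of sequential
neighborhoods `Uᵢ` of a nonempty closed set `A` which is cofinal in the open
neighborhoods of `A`, the interiors `int (Uᵢ)` form a countable neighborhood
base of `A`; in particular `A ⊆ int (Uᵢ)` for every `i`. -/
theorem interior_nbhd_base_of_sequential_nbhds {X : Type*} [TopologicalSpace X]
    [T1Space X] [FirstCountableTopology X] (A : Set X) (hA : IsClosed A)
    (hAne : A.Nonempty) (U : ℕ → Set X) (hmono : ∀ i, U (i + 1) ⊆ U i)
    (hsub : ∀ i, A ⊆ U i)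
    (hseq : ∀ i, ∀ x ∈ A, ∀ u : ℕ → X, Tendsto u atTop (nhds x) →
      ∀ᶠ n in atTop, u n ∈ U i)
    (hcof : ∀ V : Set X, IsOpen V → A ⊆ V → ∃ i, U i ⊆ V) :
    (∀ i, A ⊆ interior (U i)) ∧
      ∀ V : Set X, IsOpen V → A ⊆ V → ∃ i, interior (U i) ⊆ V := by
  constructor
  · intro i x hx
    by_contra h
    have hx' : x ∈ closure ((U i)ᶜ) := by
      rw [closure_compl]
      exact h
    obtain ⟨u, hu, hlim⟩ := mem_closure_iff_seq_limit.mp hx'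
    have := hseq i x hx u hlim
    obtain ⟨n, hn⟩ := this.exists
    exact hu n hn
  · intro V hV hAV
    obtain ⟨i, hi⟩ := hcof V hV hAV
    exact ⟨i, interior_subset.trans hi⟩
end
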